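/- Under the cellular automaton T on the triangular lattice, clusters cannot split: if x and y belong to the same constant-sign cluster C at time n, and neither σ_x nor σ_y changes at time n+1, then x and y belong to the same cluster at time n+1. -/

import Mathlib

open Classical

/-- Adjacency in the triangular lattice `𝕋`, realized on `ℤ × ℤ`. -/
def triAdj (x y : ℤ × ℤ) : Prop :=
  (y.1 - x.1, y.2 - x.2) ∈
    ({(1,0), (-1,0), (0,1), (0,-1), (1,-1), (-1,1)} : Set (ℤ × ℤ))

/-- One step of the cellular automaton `T`: the spin at `x` keeps its value iff `x` has two
non-adjacent neighbors `y₁ ≠ y₂` with the same spin as `x`; otherwise it flips. -/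
noncomputable def Tstep (σ : ℤ × ℤ → ℤ) (x : ℤ × ℤ) : ℤ :=
  if ∃ y₁ y₂ : ℤ × ℤ, y₁ ≠ y₂ ∧ triAdj x y₁ ∧ triAdj x y₂ ∧ ¬ triAdj y₁ y₂ ∧
      σ y₁ = σ x ∧ σ y₂ = σ x
  then σ x else -σ x

/-- The trajectory of the automaton `T` started from `σ₀`. -/
noncomputable def traj (σ₀ : ℤ × ℤ → ℤ) : ℕ → ℤ × ℤ → ℤ
  | 0 => σ₀
  | n + 1 => Tstep (traj σ₀ n)

/-- The six neighbors of a site of the triangular lattice. -/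
def triNbrs (x : ℤ × ℤ) : Finset (ℤ × ℤ) :=
  {(x.1 + 1, x.2), (x.1 - 1, x.2), (x.1, x.2 + 1), (x.1, x.2 - 1),
    (x.1 + 1, x.2 - 1), (x.1 - 1, x.2 + 1)}

/-- `x` and `y` lie in the same constant-sign cluster of `σ`. -/
def sameCluster (σ : ℤ × ℤ → ℤ) (x y : ℤ × ℤ) : Prop :=
  Relation.ReflTransGen (fun a b => triAdj a b ∧ σ a = σ b) x y

/-- Connectivity within a set of sites `S`. -/
def connIn (S : Set (ℤ × ℤ)) (a b : ℤ × ℤ) : Prop :=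
  Relation.ReflTransGen (fun u v => triAdj u v ∧ u ∈ S ∧ v ∈ S) a b

/-!
A shortest constant-sign path between two sites has no shortcuts: two sites two steps apart on it
are distinct and non-adjacent, so every interior site has two non-adjacent neighbours of its own
sign and keeps its spin. If the endpoints keep their spins too, the whole path survives the update.
-/

open List Relation

section Shortcut

variable {α : Type*} {r s : α → α → Prop} {P : α → Prop}

theorem reflTransGen_of_isChain_cons_of_no_shortcut
    (hs : ∀ ⦃a b⦄, r a b → P a → P b → s a b)
    (hP : ∀ ⦃a b c⦄, r a b → r b c → a ≠ c → ¬ r a c → P b) :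
    ∀ {x y : α} (l : List α), IsChain r (x :: l) → (x :: l).getLast (cons_ne_nil _ _) = y →
      P x → P y → ReflTransGen s x y
  | _, _, [], _, rfl, _, _ => .refl
  | _, _, [_], hc, rfl, hx, hy => .single (hs (isChain_pair.1 hc) hx hy)
  | x, y, b :: c :: t, hc, hlast, hx, hy => by
    obtain ⟨hxb, hbct⟩ := isChain_cons_cons.1 hc
    obtain ⟨hbc, hct⟩ := isChain_cons_cons.1 hbct
    rw [getLast_cons_cons] at hlast
    by_cases hxc : x = c
    · subst hxc
      rw [getLast_cons_cons] at hlast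
      exact reflTransGen_of_isChain_cons_of_no_shortcut hs hP t hct hlast hx hy
    by_cases hrxc : r x c
    · refine reflTransGen_of_isChain_cons_of_no_shortcut hs hP (c :: t)
        (hct.cons_cons hrxc) ?_ hx hy
      rwa [getLast_cons_cons] at hlast ⊢
    · have hb := hP hxb hbc hxc hrxc
      exact .head (hs hxb hx hb)
        (reflTransGen_of_isChain_cons_of_no_shortcut hs hP (c :: t) hbct hlast hb hy)
termination_by _ _ l => l.length

theorem Relation.ReflTransGen.of_no_shortcut {x y : α} (h : ReflTransGen r x y)
    (hs : ∀ ⦃a b⦄, r a b → P a → P b → s a b)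
    (hP : ∀ ⦃a b c⦄, r a b → r b c → a ≠ c → ¬ r a c → P b)
    (hx : P x) (hy : P y) : ReflTransGen s x y := by
  obtain ⟨l, hc, hlast⟩ := exists_isChain_cons_of_relationReflTransGen h
  exact reflTransGen_of_isChain_cons_of_no_shortcut hs hP l hc hlast hx hy

end Shortcut

theorem triAdj_symm {x y : ℤ × ℤ} (h : triAdj x y) : triAdj y x := by
  simp only [triAdj, Set.mem_insert_iff, Set.mem_singleton_iff, Prod.mk.injEq] at h ⊢
  omega

theorem tstep_eq_self_of_nonadj_nbrs {σ : ℤ × ℤ → ℤ} {a b c : ℤ × ℤ} (hac : a ≠ c)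
    (hba : triAdj b a) (hbc : triAdj b c) (hnac : ¬ triAdj a c)
    (ha : σ a = σ b) (hc : σ c = σ b) : Tstep σ b = σ b :=
  if_pos ⟨a, c, hac, hba, hbc, hnac, ha, hc⟩

theorem clusters_cannot_split_general (σ : ℤ × ℤ → ℤ)
    (x y : ℤ × ℤ) (hxy : sameCluster σ x y)
    (hx : Tstep σ x = σ x) (hy : Tstep σ y = σ y) :
    sameCluster (Tstep σ) x y := by
  refine hxy.of_no_shortcut (P := fun z => Tstep σ z = σ z) ?_ ?_ hx hy
  · rintro a b ⟨hab, hσ⟩ ha hb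
    exact ⟨hab, by rw [ha, hb, hσ]⟩
  · rintro a b c ⟨hab, hσab⟩ ⟨hbc, hσbc⟩ hac hnac
    exact tstep_eq_self_of_nonadj_nbrs hac (triAdj_symm hab) hbc
      (fun h => hnac ⟨h, hσab.trans hσbc⟩) hσab hσbc.symm

/-- Clusters cannot split under `T`: if `x` and `y` are in the same cluster and neither
spin changes in one step, then they are in the same cluster after the update. -/
theorem clusters_cannot_split (σ : ℤ × ℤ → ℤ) (hpm : ∀ z, σ z = 1 ∨ σ z = -1)
    (x y : ℤ × ℤ) (hxy : sameCluster σ x y)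
    (hx : Tstep σ x = σ x) (hy : Tstep σ y = σ y) :
    sameCluster (Tstep σ) x y :=
  clusters_cannot_split_general σ x y hxy hx hy
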